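/- For every NSB evacuation run on an initial loopless multigraph G(0) on n ≥ 2 vertices, the run terminates (i.e., the evacuation time T is finite) and satisfies 2·T ≤ 3·X′, where X′ is the minimum evacuation time of G(0); that is, the NSB algorithm has an approximation ratio no greater than 3/2 for the evacuation time. -/

import Mathlib

/-!
In every slot `k ≥ 1` a critical vertex with `U = 0` has NSB weight `2Δ`, more than any other
vertex: a critical vertex with `U = 1` weighs `Δ` and a non-critical one at most `2 (Δ - 1)`.
The vertices left exposed by a maximum-weight matching are independent, and those with `U = 0`
were exposed in slot `k - 1` or in slot `k - 2`, so the critical ones induce a bipartite graph.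
By Hall's theorem one matching covers them, and an augmenting-path exchange shows that the
maximum-weight matching then covers them all. Hence `Δ` drops by `2` in every block of slots
`3j, 3j + 1, 3j + 2` while `Δ ≥ 2`, and once `Δ ≤ 1` the next slot empties the graph: it is
empty after at most `3Δ(0)/2` slots, whereas any partition into matchings needs at least `Δ(0)`.
-/

open scoped Classical

namespace NSBPaper

variable {V : Type} [Fintype V] [DecidableEq V]

/-- Degree of a vertex in a loopless multigraph given by multiplicity function `w`. -/
def deg (w : V → V → ℕ) (v : V) : ℕ := ∑ u, w v u

/-- Maximum degree of the multigraph. -/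
def maxDeg (w : V → V → ℕ) : ℕ := Finset.univ.sup fun v => deg w v

/-- The support simple graph of a multigraph: `u` and `v` are adjacent iff `u ≠ v`
and there is at least one multi-edge between them. -/
def support (w : V → V → ℕ) : SimpleGraph V where
  Adj u v := u ≠ v ∧ 1 ≤ w u v ∧ 1 ≤ w v u
  symm := ⟨fun u v h => ⟨h.1.symm, h.2.2, h.2.1⟩⟩
  loopless := ⟨fun v h => h.1 rfl⟩

/-- A set of unordered pairs `M` saturates a vertex `v` if some pair of `M` contains `v`. -/
def Saturates (M : Finset (Sym2 V)) (v : V) : Prop := ∃ e ∈ M, v ∈ e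

/-- `M` is a matching of the multigraph `w`: its elements are non-loop edges of the
support, and no two distinct elements share a vertex. -/
def IsMatching (w : V → V → ℕ) (M : Finset (Sym2 V)) : Prop :=
  (∀ e ∈ M, ¬ e.IsDiag) ∧
  (∀ u v : V, s(u, v) ∈ M → 1 ≤ w u v) ∧
  (∀ e ∈ M, ∀ f ∈ M, e ≠ f → ∀ x : V, x ∈ e → x ∉ f)

/-- `M` is a maximal matching of `w`: no pair can be added keeping it a matching. -/
def IsMaximalMatching (w : V → V → ℕ) (M : Finset (Sym2 V)) : Prop :=
  IsMatching w M ∧ ∀ e : Sym2 V, e ∉ M → ¬ IsMatching w (insert e M)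

/-- Removing a matching `M` from the multigraph `w`: the multiplicity of each pair in `M`
decreases by one. -/
def removeMatching (w : V → V → ℕ) (M : Finset (Sym2 V)) : V → V → ℕ :=
  fun u v => if s(u, v) ∈ M then w u v - 1 else w u v

/-- The subgraph of `G` induced by `Z` is bipartite: there is a set `A` such that every
edge of `G` inside `Z` joins `A` to its complement. -/
def BipartiteOn (G : SimpleGraph V) (Z : Set V) : Prop :=
  ∃ A : Set V, ∀ ⦃u v : V⦄, u ∈ Z → v ∈ Z → G.Adj u v → (u ∈ A ↔ v ∉ A)

/-- The edge multiset of `w` can be partitioned into `T` matchings. -/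
def CanEvacuate (w : V → V → ℕ) (T : ℕ) : Prop :=
  ∃ M : Fin T → Finset (Sym2 V),
    (∀ j, IsMatching w (M j)) ∧
    ∀ u v : V, (Finset.univ.filter fun j => s(u, v) ∈ M j).card = w u v

/-- The vertex-weight of a matching: the sum of the weights of its saturated vertices. -/
noncomputable def matchWeight (φ : V → ℕ) (M : Finset (Sym2 V)) : ℕ :=
  ∑ v : V, if Saturates M v then φ v else 0

/-- `Rfun M k i = 1` iff vertex `i` is saturated by the matching chosen in slot `k`. -/
noncomputable def Rfun (M : ℕ → Finset (Sym2 V)) (k : ℕ) (i : V) : ℕ :=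
  if Saturates (M k) i then 1 else 0

/-- `Ufun M k i` is `R i (k-1) * R i (k-2)` if `k ≡ 2 [MOD 3]` and `R i (k-1)` otherwise,
with `R i k = 0` for `k < 0`. -/
noncomputable def Ufun (M : ℕ → Finset (Sym2 V)) (k : ℕ) (i : V) : ℕ :=
  if k = 0 then 0
  else if k % 3 = 2 then Rfun M (k - 1) i * Rfun M (k - 2) i
  else Rfun M (k - 1) i

/-- Vertex `i` is heavy in `w`: `n * d(i) ≥ (n - 1) * Δ`. -/
def Heavy (w : V → V → ℕ) (i : V) : Prop :=
  (Fintype.card V - 1) * maxDeg w ≤ Fintype.card V * deg w i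

/-- Vertex `i` is critical in `w`: its degree is the maximum degree. -/
def Critical (w : V → V → ℕ) (i : V) : Prop := deg w i = maxDeg w

/-- The NSB weight of vertex `i`, where `u i` records whether `i` received enough
service previously. -/
noncomputable def nsbWeight (w : V → V → ℕ) (u : V → ℕ) (i : V) : ℕ :=
  if Heavy w i then deg w i * (2 - u i) else deg w i

/-- The LC-NSB weight of vertex `i`. -/
noncomputable def lcnsbWeight (w : V → V → ℕ) (u : V → ℕ) (i : V) : ℕ :=
  if Critical w i then 5 - 2 * u i
  else if Heavy w i then 4 - 2 * u i
  else 1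

/-- An NSB evacuation run on the initial multigraph `w0`: in each slot `k`, a matching
`M k` of `G k` maximizing the total NSB weight of saturated vertices is removed. -/
structure NSBRun (w0 : V → V → ℕ) where
  G : ℕ → V → V → ℕ
  M : ℕ → Finset (Sym2 V)
  init : G 0 = w0
  step : ∀ k, G (k + 1) = removeMatching (G k) (M k)
  matching : ∀ k, IsMatching (G k) (M k)
  opt : ∀ k, ∀ M' : Finset (Sym2 V), IsMatching (G k) M' →
    matchWeight (nsbWeight (G k) (Ufun M k)) M' ≤ matchWeight (nsbWeight (G k) (Ufun M k)) (M k)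

/-- An LC-NSB evacuation run on the initial multigraph `w0`. -/
structure LCNSBRun (w0 : V → V → ℕ) where
  G : ℕ → V → V → ℕ
  M : ℕ → Finset (Sym2 V)
  init : G 0 = w0
  step : ∀ k, G (k + 1) = removeMatching (G k) (M k)
  matching : ∀ k, IsMatching (G k) (M k)
  opt : ∀ k, ∀ M' : Finset (Sym2 V), IsMatching (G k) M' →
    matchWeight (lcnsbWeight (G k) (Ufun M k)) M' ≤
      matchWeight (lcnsbWeight (G k) (Ufun M k)) (M k)

end NSBPaper

theorem Finset.mapsTo_of_surjOn_self {α : Type*} {f : α → α} {s : Finset α}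
    (hf : Set.SurjOn f s s) : Set.MapsTo f s s := by
  have himage : s = s.image f := Finset.eq_of_subset_of_card_le
    (fun x hx => by obtain ⟨y, hy, rfl⟩ := hf hx; exact Finset.mem_image_of_mem f hy)
    Finset.card_image_le
  intro x hx
  rw [Finset.mem_coe, himage]
  exact Finset.mem_image_of_mem f hx

namespace NSBPaper

section Matching

variable {V : Type} {w : V → V → ℕ} {M N : Finset (Sym2 V)}

theorem saturates_insert [DecidableEq V] {e : Sym2 V} {x : V} :
    Saturates (insert e M) x ↔ x ∈ e ∨ Saturates M x := by
  simp [Saturates]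

theorem Saturates.exists_mem {v : V} (h : Saturates M v) : ∃ y, s(v, y) ∈ M := by
  obtain ⟨e, he, hve⟩ := h
  obtain ⟨y, rfl⟩ := Sym2.mem_iff_exists.mp hve
  exact ⟨y, he⟩

theorem IsMatching.of_adj (hadj : ∀ u v, s(u, v) ∈ M → (support w).Adj u v)
    (hdisj : ∀ e ∈ M, ∀ f ∈ M, e ≠ f → ∀ x : V, x ∈ e → x ∉ f) :
    IsMatching w M := by
  refine ⟨fun e he hdiag => ?_, fun u v huv => (hadj u v huv).2.1, hdisj⟩
  induction e using Sym2.ind with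
  | _ u v => exact (hadj u v he).1 (Sym2.mk_isDiag_iff.mp hdiag)

theorem IsMatching.adj_of_mem (h : IsMatching w M) {u v : V} (huv : s(u, v) ∈ M) :
    (support w).Adj u v :=
  ⟨fun heq => h.1 _ huv (Sym2.mk_isDiag_iff.mpr heq), h.2.1 u v huv,
    h.2.1 v u (Sym2.eq_swap ▸ huv)⟩

theorem IsMatching.subset (h : IsMatching w M) (hNM : N ⊆ M) : IsMatching w N :=
  ⟨fun e he => h.1 e (hNM he), fun u v huv => h.2.1 u v (hNM huv),
    fun e he f hf => h.2.2 e (hNM he) f (hNM hf)⟩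

theorem IsMatching.eq_of_mem_of_mem (h : IsMatching w M) {e f : Sym2 V} (he : e ∈ M)
    (hf : f ∈ M) {x : V} (hxe : x ∈ e) (hxf : x ∈ f) : e = f :=
  by_contra fun hef => h.2.2 e he f hf hef x hxe hxf

theorem IsMatching.right_unique (h : IsMatching w M) {v a b : V} (ha : s(v, a) ∈ M)
    (hb : s(v, b) ∈ M) : a = b :=
  Sym2.congr_right.mp (h.eq_of_mem_of_mem ha hb (Sym2.mem_mk_left v a) (Sym2.mem_mk_left v b))

theorem IsMatching.insert_adj [DecidableEq V] (h : IsMatching w M) {a b : V}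
    (hab : (support w).Adj a b) (ha : ¬ Saturates M a) (hb : ¬ Saturates M b) :
    IsMatching w (insert s(a, b) M) := by
  have hfree : ∀ f ∈ M, ∀ x ∈ s(a, b), x ∉ f := by
    intro f hf x hx hxf
    rcases Sym2.mem_iff.mp hx with rfl | rfl
    exacts [ha ⟨f, hf, hxf⟩, hb ⟨f, hf, hxf⟩]
  refine IsMatching.of_adj (fun u v huv => ?_) (fun e he f hf hef x hxe hxf => ?_)
  · rcases Finset.mem_insert.mp huv with heq | huv
    · rcases Sym2.eq_iff.mp heq with ⟨rfl, rfl⟩ | ⟨rfl, rfl⟩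
      exacts [hab, hab.symm]
    · exact h.adj_of_mem huv
  · rcases Finset.mem_insert.mp he with rfl | he <;> rcases Finset.mem_insert.mp hf with rfl | hf
    · exact hef rfl
    · exact hfree f hf x hxe hxf
    · exact hfree e he x hxf hxe
    · exact h.2.2 e he f hf hef x hxe hxf

theorem IsMatching.insert_erase [DecidableEq V] (hM : IsMatching w M) {v y z : V}
    (hyz : s(y, z) ∈ M) (hvy : (support w).Adj v y) (hv : ¬ Saturates M v) :
    IsMatching w (insert s(v, y) (M.erase s(y, z))) ∧
      Saturates (insert s(v, y) (M.erase s(y, z))) v ∧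
      ¬ Saturates (insert s(v, y) (M.erase s(y, z))) z ∧
      ∀ x, Saturates M x → x ≠ z → Saturates (insert s(v, y) (M.erase s(y, z))) x := by
  have hzv : z ≠ v := fun h => hv (h ▸ ⟨_, hyz, Sym2.mem_mk_right y z⟩)
  have hzy : z ≠ y := fun h => (hM.adj_of_mem hyz).1 h.symm
  have hgone : ∀ x ∈ s(y, z), ¬ Saturates (M.erase s(y, z)) x := by
    rintro x hx ⟨e, he, hxe⟩
    exact (Finset.mem_erase.mp he).1 (hM.eq_of_mem_of_mem (Finset.mem_of_mem_erase he) hyz hxe hx)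
  refine ⟨(hM.subset (Finset.erase_subset _ _)).insert_adj hvy
      (fun ⟨e, he, hve⟩ => hv ⟨e, Finset.mem_of_mem_erase he, hve⟩)
      (hgone y (Sym2.mem_mk_left y z)),
    saturates_insert.mpr (Or.inl (Sym2.mem_mk_left v y)), ?_, fun x ⟨e, he, hxe⟩ hxz => ?_⟩
  · rw [saturates_insert, Sym2.mem_iff, not_or, not_or]
    exact ⟨⟨hzv, hzy⟩, hgone z (Sym2.mem_mk_right y z)⟩
  · by_cases hey : e = s(y, z)
    · subst hey
      rcases Sym2.mem_iff.mp hxe with rfl | rfl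
      exacts [saturates_insert.mpr (Or.inl (Sym2.mem_mk_right v x)), absurd rfl hxz]
    · exact saturates_insert.mpr (Or.inr ⟨e, Finset.mem_erase.mpr ⟨hey, he⟩, hxe⟩)

/-- Augmentation along the alternating path of `M ∆ N` that starts at `v`. -/
theorem IsMatching.exists_augment [DecidableEq V] (hM : IsMatching w M) (hN : IsMatching w N)
    {v : V} (hvN : Saturates N v) (hvM : ¬ Saturates M v) :
    ∃ M', IsMatching w M' ∧ Saturates M' v ∧
      ∃ x₀, ∀ x, Saturates M x → ¬ Saturates M' x → x = x₀ ∧ ¬ Saturates N x := by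
  induction hk : (N \ M).card using Nat.strong_induction_on generalizing M v with
  | _ k ih =>
  obtain ⟨y, hvy⟩ := hvN.exists_mem
  by_cases hyM : Saturates M y
  · obtain ⟨z, hyz⟩ := hyM.exists_mem
    obtain ⟨hM₁, hv₁, hz₁, hsat₁⟩ := hM.insert_erase hyz (hN.adj_of_mem hvy) hvM
    by_cases hzN : Saturates N z
    · have hlt : (N \ insert s(v, y) (M.erase s(y, z))).card < k := by
        have hvyM : s(v, y) ∉ M := fun h => hvM ⟨_, h, Sym2.mem_mk_left v y⟩
        refine hk ▸ Finset.card_lt_card ((Finset.ssubset_iff_of_subset fun g hg => ?_).mpr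
          ⟨s(v, y), Finset.mem_sdiff.mpr ⟨hvy, hvyM⟩, by simp⟩)
        obtain ⟨hgN, hg₁⟩ := Finset.mem_sdiff.mp hg
        refine Finset.mem_sdiff.mpr ⟨hgN, fun hgM => hg₁ (Finset.mem_insert_of_mem ?_)⟩
        -- the only edge of `M` missing from `M₁` is `yz`, and `yz ∈ N` would force `z = v`
        refine Finset.mem_erase.mpr ⟨fun hg => hz₁ ?_, hgM⟩
        have : z = v := hN.right_unique (hg ▸ hgN) (Sym2.eq_swap ▸ hvy)
        exact this ▸ hv₁
      obtain ⟨M', hM', hz', x₀, hlost⟩ := ih _ hlt hM₁ hzN hz₁ rfl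
      refine ⟨M', hM', by_contra fun hv' => (hlost v hv₁ hv').2 hvN, x₀, fun x hx hx' => ?_⟩
      exact hlost x (hsat₁ x hx fun hxz => hx' (hxz ▸ hz')) hx'
    · refine ⟨_, hM₁, hv₁, z, fun x hx hx₁ => ?_⟩
      obtain rfl : x = z := by_contra fun hxz => hx₁ (hsat₁ x hx hxz)
      exact ⟨rfl, hzN⟩
  · exact ⟨_, hM.insert_adj (hN.adj_of_mem hvy) hvM hyM,
      saturates_insert.mpr (Or.inl (Sym2.mem_mk_left v y)), v,
      fun x hx hx' => absurd (saturates_insert.mpr (Or.inr hx)) hx'⟩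

end Matching

section MaxWeight

variable {V : Type} [Fintype V] {w : V → V → ℕ} {φ : V → ℕ} {M N : Finset (Sym2 V)}

theorem matchWeight_eq_sum_filter (φ : V → ℕ) (M : Finset (Sym2 V)) :
    matchWeight φ M = ∑ x ∈ Finset.univ.filter (Saturates M), φ x :=
  (Finset.sum_filter _ _).symm

theorem matchWeight_lt_of_saturates [DecidableEq V] {M' : Finset (Sym2 V)} {v x₀ : V}
    (hv : ¬ Saturates M v) (hv' : Saturates M' v) (hpos : 0 < φ v)
    (hlost : ∀ x, Saturates M x → ¬ Saturates M' x → x = x₀ ∧ φ x < φ v) :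
    matchWeight φ M < matchWeight φ M' := by
  rw [matchWeight_eq_sum_filter, matchWeight_eq_sum_filter]
  set A := Finset.univ.filter (Saturates M)
  set B := Finset.univ.filter (Saturates M')
  have hloss : ∑ x ∈ A \ B, φ x < φ v := by
    have hsub : A \ B ⊆ {x₀} := fun x hx => by
      simp only [A, B, Finset.mem_sdiff, Finset.mem_filter, Finset.mem_univ, true_and] at hx
      exact Finset.mem_singleton.mpr (hlost x hx.1 hx.2).1
    rcases Finset.subset_singleton_iff.mp hsub with h | h
    · simpa [h] using hpos
    · have hx₀ : x₀ ∈ A \ B := h ▸ Finset.mem_singleton_self x₀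
      simp only [A, B, Finset.mem_sdiff, Finset.mem_filter, Finset.mem_univ, true_and] at hx₀
      simpa [h] using (hlost x₀ hx₀.1 hx₀.2).2
  have hgain : φ v ≤ ∑ x ∈ B \ A, φ x :=
    Finset.single_le_sum (fun _ _ => Nat.zero_le _) (by simp [A, B, hv, hv'])
  have hA := Finset.sum_sdiff (f := φ) (Finset.subset_union_left (s₁ := A) (s₂ := B))
  have hB := Finset.sum_sdiff (f := φ) (Finset.subset_union_right (s₁ := A) (s₂ := B))
  rw [Finset.union_sdiff_left] at hA
  rw [Finset.union_sdiff_right] at hB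
  omega

def IsMaxWeightMatching (w : V → V → ℕ) (φ : V → ℕ) (M : Finset (Sym2 V)) : Prop :=
  IsMatching w M ∧ ∀ M', IsMatching w M' → matchWeight φ M' ≤ matchWeight φ M

theorem IsMaxWeightMatching.not_adj [DecidableEq V] (hM : IsMaxWeightMatching w φ M)
    {u v : V} (hu : ¬ Saturates M u) (hv : ¬ Saturates M v) (hpos : 0 < φ u) :
    ¬ (support w).Adj u v := fun huv =>
  (hM.2 _ (hM.1.insert_adj huv hu hv)).not_gt <|
    matchWeight_lt_of_saturates (x₀ := u) hu
      (saturates_insert.mpr (Or.inl (Sym2.mem_mk_left u v))) hpos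
      fun _ hx hx' => absurd (saturates_insert.mpr (Or.inr hx)) hx'

theorem IsMaxWeightMatching.saturates [DecidableEq V] (hM : IsMaxWeightMatching w φ M)
    (hN : IsMatching w N) {v : V} (hvN : Saturates N v) (hpos : 0 < φ v)
    (hlt : ∀ x, ¬ Saturates N x → φ x < φ v) : Saturates M v := by
  by_contra hvM
  obtain ⟨M', hM', hv', x₀, hlost⟩ := hM.1.exists_augment hN hvN hvM
  exact (hM.2 M' hM').not_gt <| matchWeight_lt_of_saturates hvM hv' hpos fun x hx hx' =>
    ⟨(hlost x hx hx').1, hlt x (hlost x hx hx').2⟩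

end MaxWeight

section Degree

variable {V : Type} [Fintype V] (w : V → V → ℕ)

theorem deg_le_maxDeg (v : V) : deg w v ≤ maxDeg w :=
  Finset.le_sup (Finset.mem_univ v)

theorem le_deg (u v : V) : w u v ≤ deg w u :=
  Finset.single_le_sum (fun _ _ => Nat.zero_le _) (Finset.mem_univ v)

theorem add_le_deg [DecidableEq V] {u a b : V} (hab : a ≠ b) : w u a + w u b ≤ deg w u := by
  rw [← Finset.sum_pair hab]
  exact Finset.sum_le_sum_of_subset (Finset.subset_univ _)

theorem maxDeg_le_iff {D : ℕ} : maxDeg w ≤ D ↔ ∀ v, deg w v ≤ D := by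
  simp [maxDeg]

theorem maxDeg_lt_iff {D : ℕ} (hD : 0 < D) : maxDeg w < D ↔ ∀ v, deg w v < D := by
  simp [maxDeg, Finset.sup_lt_iff hD]

theorem maxDeg_eq_zero_iff : maxDeg w = 0 ↔ ∀ u v, w u v = 0 := by
  simp [maxDeg, deg, Finset.sup_eq_zero, Finset.sum_eq_zero_iff]

end Degree

section Covering

variable {V : Type} {w : V → V → ℕ}

theorem BipartiteOn.mono {G : SimpleGraph V} {Z Z' : Set V} (h : BipartiteOn G Z)
    (hZ : Z' ⊆ Z) : BipartiteOn G Z' :=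
  let ⟨A, hA⟩ := h
  ⟨A, fun _ _ hu hv => hA (hZ hu) (hZ hv)⟩

theorem bipartiteOn_of_subset_union {G : SimpleGraph V} {Z I J : Set V} (hZ : Z ⊆ I ∪ J)
    (hI : ∀ u ∈ I, ∀ v ∈ I, ¬ G.Adj u v) (hJ : ∀ u ∈ J, ∀ v ∈ J, ¬ G.Adj u v) :
    BipartiteOn G Z := by
  refine ⟨I, fun u v hu hv huv => ?_⟩
  rcases hZ hu with hu | hu <;> rcases hZ hv with hv | hv
  · exact absurd huv (hI u hu v hv)
  · exact iff_of_true hu fun hvI => hI u hu v hvI huv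
  · exact iff_of_false (fun huI => hI u huI v hv huv) (not_not_intro hv)
  · exact absurd huv (hJ u hu v hv)

theorem eq_zero_of_not_adj (hsymm : ∀ a b, w a b = w b a) (hloop : ∀ v, w v v = 0) {u v : V}
    (h : ¬ (support w).Adj u v) : w u v = 0 := by
  by_contra hne
  exact h ⟨fun huv => hne (huv ▸ hloop u), Nat.one_le_iff_ne_zero.mpr hne,
    Nat.one_le_iff_ne_zero.mpr (hsymm u v ▸ hne)⟩

/-- When `h` permutes `Z`, its cycles are even by bipartiteness, and every other edge
`z — h z` of each cycle (those with `z ∈ A`) forms the matching. -/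
theorem exists_matching_of_bijOn [DecidableEq V] {h : V → V} {Z : Finset V}
    (hbij : Set.BijOn h Z Z) (hadj : ∀ z ∈ Z, (support w).Adj z (h z))
    (hbip : BipartiteOn (support w) Z) :
    ∃ N, IsMatching w N ∧ (∀ z ∈ Z, Saturates N z) ∧
      ∀ x, Saturates N x → x ∈ Z := by
  obtain ⟨A, hA⟩ := hbip
  have hcol : ∀ z ∈ Z, (z ∈ A ↔ h z ∉ A) := fun z hz => hA hz (hbij.mapsTo hz) (hadj z hz)
  refine ⟨(Z.filter (· ∈ A)).image fun z => s(z, h z), IsMatching.of_adj ?_ ?_,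
    fun z hz => ?_, ?_⟩
  · intro u v huv
    obtain ⟨z, hz, hze⟩ := Finset.mem_image.mp huv
    rcases Sym2.eq_iff.mp hze with ⟨rfl, rfl⟩ | ⟨rfl, rfl⟩
    exacts [hadj z (Finset.mem_filter.mp hz).1, (hadj z (Finset.mem_filter.mp hz).1).symm]
  · simp only [Finset.mem_image]
    rintro _ ⟨z₁, hz₁, rfl⟩ _ ⟨z₂, hz₂, rfl⟩ hne x hx₁ hx₂
    obtain ⟨hz₁Z, hz₁A⟩ := Finset.mem_filter.mp hz₁
    obtain ⟨hz₂Z, hz₂A⟩ := Finset.mem_filter.mp hz₂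
    have hz : z₁ ≠ z₂ := fun h => hne (h ▸ rfl)
    rcases Sym2.mem_iff.mp hx₁ with rfl | rfl <;> rcases Sym2.mem_iff.mp hx₂ with h₂ | h₂
    · exact hz h₂
    · exact (hcol z₂ hz₂Z).mp hz₂A (h₂ ▸ hz₁A)
    · exact (hcol z₁ hz₁Z).mp hz₁A (h₂ ▸ hz₂A)
    · exact hz (hbij.injOn hz₁Z hz₂Z h₂)
  · by_cases hzA : z ∈ A
    · exact ⟨_, Finset.mem_image_of_mem _ (Finset.mem_filter.mpr ⟨hz, hzA⟩),
        Sym2.mem_mk_left _ _⟩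
    · obtain ⟨z', hz', rfl⟩ := hbij.surjOn hz
      exact ⟨_, Finset.mem_image_of_mem _
        (Finset.mem_filter.mpr ⟨hz', (hcol z' hz').mpr hzA⟩),
        Sym2.mem_mk_right _ _⟩
  · rintro x ⟨_, he, hx⟩
    obtain ⟨z, hz, rfl⟩ := Finset.mem_image.mp he
    rcases Sym2.mem_iff.mp hx with rfl | rfl
    exacts [(Finset.mem_filter.mp hz).1, hbij.mapsTo (Finset.mem_filter.mp hz).1]

/-- A vertex `z₀ ∈ Z` outside `h '' Z` starts a path of `h`: match `z₀` with `h z₀` and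
recurse on the rest of `Z`. When there is no such vertex, `h` permutes `Z`. -/
theorem exists_matching_of_injOn [DecidableEq V] (h : V → V) (Z : Finset V)
    (hinj : Set.InjOn h Z) (hadj : ∀ z ∈ Z, (support w).Adj z (h z))
    (hbip : BipartiteOn (support w) Z) :
    ∃ N, IsMatching w N ∧ (∀ z ∈ Z, Saturates N z) ∧
      ∀ x, Saturates N x → x ∈ Z ∨ x ∈ Z.image h := by
  induction Z using Finset.strongInduction with
  | H Z ih =>
  by_cases hsurj : Set.SurjOn h Z Z
  · obtain ⟨N, hN, hsat, hsub⟩ :=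
      exists_matching_of_bijOn ⟨Finset.mapsTo_of_surjOn_self hsurj, hinj, hsurj⟩ hadj hbip
    exact ⟨N, hN, hsat, fun x hx => Or.inl (hsub x hx)⟩
  obtain ⟨z₀, hz₀, hsrc⟩ : ∃ z₀ ∈ Z, ∀ z ∈ Z, h z ≠ z₀ := by
    simpa [Set.SurjOn, Set.subset_def] using hsurj
  set Z' := (Z.erase z₀).erase (h z₀)
  have hZ'Z : Z' ⊆ Z := (Finset.erase_subset _ _).trans (Finset.erase_subset _ _)
  obtain ⟨N', hN', hsat', hsub'⟩ :=
    ih Z' ((Finset.erase_subset _ _).trans_ssubset (Finset.erase_ssubset hz₀))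
      (hinj.mono (Finset.coe_subset.mpr hZ'Z)) (fun z hz => hadj z (hZ'Z hz))
      (hbip.mono (Finset.coe_subset.mpr hZ'Z))
  have hfree : ∀ x, x = z₀ ∨ x = h z₀ → ¬ Saturates N' x := by
    intro x hx hsat
    rcases hsub' x hsat with hxZ' | hxh
    · rcases hx with rfl | rfl <;> simp [Z'] at hxZ'
    · obtain ⟨z, hz, rfl⟩ := Finset.mem_image.mp hxh
      rcases hx with hx | hx
      · exact hsrc z (hZ'Z hz) hx
      · simp [Z', hinj (hZ'Z hz) hz₀ hx] at hz
  refine ⟨insert s(z₀, h z₀) N',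
    hN'.insert_adj (hadj z₀ hz₀) (hfree _ (Or.inl rfl)) (hfree _ (Or.inr rfl)),
    fun z hz => ?_, fun x hx => ?_⟩
  · rw [saturates_insert, Sym2.mem_iff]
    by_cases hz₀' : z = z₀ ∨ z = h z₀
    · exact Or.inl hz₀'
    · rw [not_or] at hz₀'
      exact Or.inr (hsat' z (by simp [Z', hz, hz₀'.1, hz₀'.2]))
  · rcases saturates_insert.mp hx with hx | hx
    · rcases Sym2.mem_iff.mp hx with rfl | rfl
      exacts [Or.inl hz₀, Or.inr (Finset.mem_image_of_mem h hz₀)]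
    · rcases hsub' x hx with hxZ' | hxh
      · exact Or.inl (hZ'Z hxZ')
      · exact Or.inr (Finset.image_subset_image hZ'Z hxh)

variable [Fintype V] [DecidableEq V]

/-- Hall's condition for the critical vertices `s`: counting edges, `|s| Δ ≤ |N(s)| Δ`. -/
theorem card_le_card_biUnion_adj (hsymm : ∀ a b, w a b = w b a) (hloop : ∀ v, w v v = 0)
    (hΔ : 0 < maxDeg w) {s : Finset V} (hs : ∀ z ∈ s, Critical w z) :
    s.card ≤ (s.biUnion fun z => Finset.univ.filter ((support w).Adj z)).card := by
  set B := s.biUnion fun z => Finset.univ.filter ((support w).Adj z)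
  have hdeg : ∀ z ∈ s, deg w z = ∑ y ∈ B, w y z := fun z hz => by
    rw [deg, ← Finset.sum_subset (Finset.subset_univ B) fun y _ hy =>
      eq_zero_of_not_adj hsymm hloop fun hadj =>
        hy (Finset.mem_biUnion.mpr ⟨z, hz, by simpa using hadj⟩)]
    exact Finset.sum_congr rfl fun y _ => hsymm z y
  refine Nat.le_of_mul_le_mul_right ?_ hΔ
  calc s.card * maxDeg w = ∑ z ∈ s, deg w z := by
        rw [Finset.sum_congr rfl hs, Finset.sum_const, smul_eq_mul]
    _ = ∑ y ∈ B, ∑ z ∈ s, w y z := by rw [Finset.sum_congr rfl hdeg, Finset.sum_comm]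
    _ ≤ ∑ y ∈ B, deg w y :=
        Finset.sum_le_sum fun y _ => Finset.sum_le_sum_of_subset (Finset.subset_univ s)
    _ ≤ ∑ _y ∈ B, maxDeg w := Finset.sum_le_sum fun y _ => deg_le_maxDeg w y
    _ = B.card * maxDeg w := by rw [Finset.sum_const, smul_eq_mul]

theorem exists_matching_saturating_critical (hsymm : ∀ a b, w a b = w b a)
    (hloop : ∀ v, w v v = 0) (hΔ : 0 < maxDeg w) (Z : Finset V) (hZ : ∀ z ∈ Z, Critical w z)
    (hbip : BipartiteOn (support w) Z) : ∃ N, IsMatching w N ∧ ∀ z ∈ Z, Saturates N z := by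
  let t : Z → Finset V := fun z => Finset.univ.filter ((support w).Adj z)
  have hall : ∀ s : Finset Z, s.card ≤ (s.biUnion t).card := fun s => by
    have := card_le_card_biUnion_adj hsymm hloop hΔ (s := s.image Subtype.val)
      (by simpa using fun z hz _ => hZ z hz)
    rwa [Finset.card_image_of_injective _ Subtype.val_injective, Finset.image_biUnion] at this
  obtain ⟨f, hfinj, hft⟩ := (Finset.all_card_le_biUnion_card_iff_exists_injective t).mp hall
  let h : V → V := fun x => if hx : x ∈ Z then f ⟨x, hx⟩ else x
  have hh : ∀ z (hz : z ∈ Z), h z = f ⟨z, hz⟩ := fun z hz => dif_pos hz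
  obtain ⟨N, hN, hsat, -⟩ := exists_matching_of_injOn h Z
    (fun z hz z' hz' he => by
      rw [hh z hz, hh z' hz'] at he
      exact congrArg Subtype.val (hfinj he))
    (fun z hz => by rw [hh z hz]; simpa [t] using hft ⟨z, hz⟩) hbip
  exact ⟨N, hN, hsat⟩

end Covering

section NSBWeight

variable {V : Type} [Fintype V] {w : V → V → ℕ} {u : V → ℕ} {i : V}

theorem Critical.heavy (h : Critical w i) : Heavy w i := by
  rw [Heavy, h]
  exact Nat.mul_le_mul_right _ (Nat.sub_le _ _)

theorem Critical.nsbWeight_eq (h : Critical w i) : nsbWeight w u i = maxDeg w * (2 - u i) := by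
  rw [nsbWeight, if_pos h.heavy, h]

theorem deg_le_nsbWeight (hu : u i ≤ 1) : deg w i ≤ nsbWeight w u i := by
  unfold nsbWeight
  split_ifs
  · exact Nat.le_mul_of_pos_right _ (by omega)
  · rfl

theorem nsbWeight_le_two_mul_deg : nsbWeight w u i ≤ 2 * deg w i := by
  unfold nsbWeight
  split_ifs
  · rw [mul_comm]
    exact Nat.mul_le_mul_right _ (Nat.sub_le _ _)
  · omega

theorem nsbWeight_lt_two_mul_maxDeg (hu : u i ≤ 1) (hΔ : 0 < maxDeg w)
    (hi : ¬ (Critical w i ∧ u i = 0)) : nsbWeight w u i < 2 * maxDeg w := by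
  by_cases hc : Critical w i
  · have hu0 : u i ≠ 0 := fun h => hi ⟨hc, h⟩
    rw [hc.nsbWeight_eq, show u i = 1 by omega]
    omega
  · have hlt : deg w i < maxDeg w := lt_of_le_of_ne (deg_le_maxDeg w i) hc
    have := nsbWeight_le_two_mul_deg (w := w) (u := u) (i := i)
    omega

/-- A critical vertex with `u = 0` carries the top NSB weight `2Δ`. -/
theorem IsMaxWeightMatching.saturates_of_critical (hsymm : ∀ a b, w a b = w b a)
    (hloop : ∀ v, w v v = 0) (hu : ∀ i, u i ≤ 1) (hΔ : 0 < maxDeg w)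
    {M : Finset (Sym2 V)} (hM : IsMaxWeightMatching w (nsbWeight w u) M)
    (hbip : BipartiteOn (support w) {z | Critical w z ∧ u z = 0})
    {v : V} (hv : Critical w v) (hv0 : u v = 0) : Saturates M v := by
  set Z := Finset.univ.filter fun z => Critical w z ∧ u z = 0
  obtain ⟨N, hN, hsat⟩ := exists_matching_saturating_critical hsymm hloop hΔ Z
    (fun z hz => (Finset.mem_filter.mp hz).2.1) (hbip.mono fun z hz => by simpa [Z] using hz)
  have htop : nsbWeight w u v = 2 * maxDeg w := by
    rw [hv.nsbWeight_eq, hv0, mul_comm]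
  refine hM.saturates hN (hsat v (by simp [Z, hv, hv0])) (by rw [htop]; omega) fun x hx => htop ▸
    nsbWeight_lt_two_mul_maxDeg (hu x) hΔ fun hx' => hx (hsat x (by simpa [Z] using hx'))

end NSBWeight

section ServiceIndicators

variable {V : Type} {M : ℕ → Finset (Sym2 V)} {k : ℕ} {i : V}

theorem rfun_le_one : Rfun M k i ≤ 1 := by
  unfold Rfun
  split_ifs <;> omega

theorem rfun_eq_one_iff : Rfun M k i = 1 ↔ Saturates (M k) i := by
  simp [Rfun]

theorem ufun_le_one : Ufun M k i ≤ 1 := by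
  unfold Ufun
  split_ifs
  · omega
  · exact (Nat.mul_le_mul rfun_le_one rfun_le_one : _ ≤ 1 * 1)
  · exact rfun_le_one

theorem ufun_succ (hk : (k + 1) % 3 ≠ 2) : Ufun M (k + 1) i = Rfun M k i := by
  simp [Ufun, hk]

theorem ufun_add_two (hk : (k + 2) % 3 = 2) : Ufun M (k + 2) i = Rfun M (k + 1) i * Rfun M k i := by
  simp [Ufun, hk]

theorem not_saturates_of_ufun_eq_zero (hk : k ≠ 0) (h : Ufun M k i = 0) :
    ¬ Saturates (M (k - 1)) i ∨ ¬ Saturates (M (k - 2)) i := by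
  simp only [← rfun_eq_one_iff]
  rw [Ufun, if_neg hk] at h
  split_ifs at h
  · rcases Nat.mul_eq_zero.mp h with h | h
    exacts [Or.inl (by omega), Or.inr (by omega)]
  · exact Or.inl (by omega)

end ServiceIndicators

namespace NSBRun

variable {V : Type} [Fintype V] [DecidableEq V] {w0 : V → V → ℕ} (run : NSBRun w0)

theorem isMaxWeightMatching (k : ℕ) :
    IsMaxWeightMatching (run.G k) (nsbWeight (run.G k) (Ufun run.M k)) (run.M k) :=
  ⟨run.matching k, run.opt k⟩

theorem G_succ (k : ℕ) (u v : V) :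
    run.G (k + 1) u v = if s(u, v) ∈ run.M k then run.G k u v - 1 else run.G k u v := by
  rw [run.step k]
  rfl

theorem G_symm (hsymm : ∀ u v, w0 u v = w0 v u) (k : ℕ) (u v : V) :
    run.G k u v = run.G k v u := by
  induction k generalizing u v with
  | zero => rw [run.init]; exact hsymm u v
  | succ k ih => rw [G_succ, G_succ, Sym2.eq_swap, ih]

theorem G_loopless (hloop : ∀ v, w0 v v = 0) (k : ℕ) (v : V) : run.G k v v = 0 := by
  induction k with
  | zero => rw [run.init]; exact hloop v
  | succ k ih => rw [G_succ, ih]; split <;> rfl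

theorem G_succ_le (k : ℕ) (u v : V) : run.G (k + 1) u v ≤ run.G k u v := by
  rw [G_succ]
  split <;> omega

theorem support_antitone : Antitone fun k => support (run.G k) :=
  antitone_nat_of_succ_le fun k _ _ h =>
    ⟨h.1, h.2.1.trans (run.G_succ_le k _ _), h.2.2.trans (run.G_succ_le k _ _)⟩

theorem deg_succ_add_rfun (k : ℕ) (v : V) :
    deg (run.G (k + 1)) v + Rfun run.M k v = deg (run.G k) v := by
  unfold Rfun deg
  split_ifs with hsat
  · obtain ⟨y, hvy⟩ := hsat.exists_mem
    have hy : run.G (k + 1) v y + 1 = run.G k v y := by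
      have := (run.matching k).2.1 v y hvy
      rw [G_succ, if_pos hvy]
      omega
    have hrest : ∑ u ∈ Finset.univ.erase y, run.G (k + 1) v u =
        ∑ u ∈ Finset.univ.erase y, run.G k v u :=
      Finset.sum_congr rfl fun u hu => by
        rw [G_succ, if_neg fun h => Finset.ne_of_mem_erase hu ((run.matching k).right_unique h hvy)]
    rw [← Finset.add_sum_erase _ _ (Finset.mem_univ y),
      ← Finset.add_sum_erase _ _ (Finset.mem_univ y), hrest]
    omega
  · rw [add_zero]
    exact Finset.sum_congr rfl fun u _ => by
      rw [G_succ, if_neg fun h => hsat ⟨_, h, Sym2.mem_mk_left v u⟩]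

theorem maxDeg_succ_le (k : ℕ) : maxDeg (run.G (k + 1)) ≤ maxDeg (run.G k) :=
  (maxDeg_le_iff _).mpr fun v =>
    (Nat.le.intro (run.deg_succ_add_rfun k v)).trans (deg_le_maxDeg _ v)

theorem not_adj_of_not_saturates {k j : ℕ} (hkj : k ≤ j) {x y : V}
    (hx : ¬ Saturates (run.M k) x) (hy : ¬ Saturates (run.M k) y) :
    ¬ (support (run.G j)).Adj x y := fun hxy =>
  have hxy' := run.support_antitone hkj hxy
  (run.isMaxWeightMatching k).not_adj hx hy
    (hxy'.2.1.trans ((le_deg _ x y).trans (deg_le_nsbWeight ufun_le_one))) hxy'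

/-- `U = 0` means exposed in slot `k - 1` or in slot `k - 2`, and the vertices exposed in one
slot are independent from then on. -/
theorem bipartiteOn_critical {k : ℕ} (hk : k ≠ 0) :
    BipartiteOn (support (run.G k)) {z | Critical (run.G k) z ∧ Ufun run.M k z = 0} :=
  bipartiteOn_of_subset_union (fun _ hz => not_saturates_of_ufun_eq_zero hk hz.2)
    (fun _ hx _ hy => run.not_adj_of_not_saturates (Nat.sub_le k 1) hx hy)
    (fun _ hx _ hy => run.not_adj_of_not_saturates (Nat.sub_le k 2) hx hy)

theorem rfun_eq_one_of_critical (hsymm : ∀ u v, w0 u v = w0 v u) (hloop : ∀ v, w0 v v = 0)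
    {k : ℕ} (hk : k ≠ 0) (hΔ : 0 < maxDeg (run.G k)) {v : V} (hv : Critical (run.G k) v)
    (hu : Ufun run.M k v = 0) : Rfun run.M k v = 1 :=
  rfun_eq_one_iff.mpr <| (run.isMaxWeightMatching k).saturates_of_critical
    (run.G_symm hsymm k) (run.G_loopless hloop k) (fun _ => ufun_le_one) hΔ
    (run.bipartiteOn_critical hk) hv hu

/-- A vertex exposed in slots `k` and `k + 1` would be critical with `U = 0` in slot `k + 1`. -/
theorem maxDeg_add_two_lt (hsymm : ∀ u v, w0 u v = w0 v u) (hloop : ∀ v, w0 v v = 0)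
    {k : ℕ} (hk : (k + 1) % 3 ≠ 2) (hΔ : 0 < maxDeg (run.G k)) :
    maxDeg (run.G (k + 2)) < maxDeg (run.G k) := by
  refine (maxDeg_lt_iff _ hΔ).mpr fun x => Nat.lt_of_not_le fun hge => ?_
  have h₀ := run.deg_succ_add_rfun k x
  have h₁ : deg (run.G (k + 2)) x + Rfun run.M (k + 1) x = deg (run.G (k + 1)) x :=
    run.deg_succ_add_rfun (k + 1) x
  have hdeg := deg_le_maxDeg (run.G k) x
  have hmax := run.maxDeg_succ_le k
  have hdeg₁ := deg_le_maxDeg (run.G (k + 1)) x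
  have hcrit : Critical (run.G (k + 1)) x := by
    rw [Critical]
    omega
  have hserved := run.rfun_eq_one_of_critical hsymm hloop (k := k + 1) (by omega) (by omega) hcrit
    (by rw [ufun_succ hk]; omega)
  omega

/-- After the first two slots `Δ` has dropped by one, and a vertex still critical in the third
slot was served in neither or in both of the previous two: it is served now or has lost `2`. -/
theorem maxDeg_add_three_add_two_le (hsymm : ∀ u v, w0 u v = w0 v u)
    (hloop : ∀ v, w0 v v = 0) {k : ℕ} (hk : k % 3 = 0) (hΔ : 2 ≤ maxDeg (run.G k)) :
    maxDeg (run.G (k + 3)) + 2 ≤ maxDeg (run.G k) := by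
  have hdrop := run.maxDeg_add_two_lt hsymm hloop (k := k) (by omega) (by omega)
  suffices ∀ x, deg (run.G (k + 3)) x ≤ maxDeg (run.G k) - 2 by
    have := (maxDeg_le_iff _).mpr this
    omega
  intro x
  by_contra hlt
  have h₀ := run.deg_succ_add_rfun k x
  have h₁ : deg (run.G (k + 2)) x + Rfun run.M (k + 1) x = deg (run.G (k + 1)) x :=
    run.deg_succ_add_rfun (k + 1) x
  have h₂ : deg (run.G (k + 3)) x + Rfun run.M (k + 2) x = deg (run.G (k + 2)) x :=
    run.deg_succ_add_rfun (k + 2) x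
  have hdeg := deg_le_maxDeg (run.G k) x
  have hdeg₂ := deg_le_maxDeg (run.G (k + 2)) x
  have hcrit : Critical (run.G (k + 2)) x := by
    rw [Critical]
    omega
  have hu : Ufun run.M (k + 2) x ≠ 0 := fun hu => by
    have := run.rfun_eq_one_of_critical hsymm hloop (k := k + 2) (by omega) (by omega) hcrit hu
    omega
  rw [ufun_add_two (by omega)] at hu
  obtain ⟨hr₁, hr₀⟩ := mul_ne_zero_iff.mp hu
  omega

/-- The neighbour `y` of an exposed `x` is covered by an edge `yz` with `z ≠ x`, so `d(y) ≥ 2`.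
-/
theorem saturates_of_maxDeg_le_one (hsymm : ∀ u v, w0 u v = w0 v u) (hloop : ∀ v, w0 v v = 0)
    {k : ℕ} (hΔ : maxDeg (run.G k) ≤ 1) {x : V} (hx : 0 < deg (run.G k) x) :
    Saturates (run.M k) x := by
  obtain ⟨y, -, hxy⟩ := Finset.exists_ne_zero_of_sum_ne_zero hx.ne'
  have hadj : (support (run.G k)).Adj x y := by_contra fun h =>
    hxy (eq_zero_of_not_adj (run.G_symm hsymm k) (run.G_loopless hloop k) h)
  by_contra hxM
  have hyM : Saturates (run.M k) y := by_contra fun hyM =>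
    run.not_adj_of_not_saturates le_rfl hxM hyM hadj
  obtain ⟨z, hyz⟩ := hyM.exists_mem
  have hzx : z ≠ x := fun h => hxM ⟨_, hyz, h ▸ Sym2.mem_mk_right y z⟩
  have := add_le_deg (run.G k) (u := y) hzx
  have := (run.matching k).2.1 y z hyz
  have := deg_le_maxDeg (run.G k) y
  have := hadj.2.2
  omega

theorem maxDeg_succ_eq_zero (hsymm : ∀ u v, w0 u v = w0 v u) (hloop : ∀ v, w0 v v = 0)
    {k : ℕ} (hΔ : maxDeg (run.G k) ≤ 1) : maxDeg (run.G (k + 1)) = 0 := by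
  refine Nat.eq_zero_of_le_zero ((maxDeg_le_iff _).mpr fun x => ?_)
  have h₀ := run.deg_succ_add_rfun k x
  rcases Nat.eq_zero_or_pos (deg (run.G k) x) with hx | hx
  · omega
  · have := rfun_eq_one_iff.mpr (run.saturates_of_maxDeg_le_one hsymm hloop hΔ hx)
    have := deg_le_maxDeg (run.G k) x
    omega

theorem maxDeg_three_mul_le (hsymm : ∀ u v, w0 u v = w0 v u) (hloop : ∀ v, w0 v v = 0)
    (j : ℕ) : maxDeg (run.G (3 * j)) ≤ maxDeg w0 - 2 * j := by
  induction j with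
  | zero => simp [run.init]
  | succ j ih =>
    rw [show 3 * (j + 1) = 3 * j + 3 by ring]
    by_cases hΔ : 2 ≤ maxDeg (run.G (3 * j))
    · have := run.maxDeg_add_three_add_two_le hsymm hloop (k := 3 * j) (by omega) hΔ
      omega
    · have h₁ := run.maxDeg_succ_eq_zero hsymm hloop (k := 3 * j) (by omega)
      have h₂ : maxDeg (run.G (3 * j + 2)) ≤ _ := run.maxDeg_succ_le (3 * j + 1)
      have h₃ : maxDeg (run.G (3 * j + 3)) ≤ _ := run.maxDeg_succ_le (3 * j + 2)
      omega

theorem exists_maxDeg_eq_zero (hsymm : ∀ u v, w0 u v = w0 v u) (hloop : ∀ v, w0 v v = 0) :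
    ∃ K, maxDeg (run.G K) = 0 ∧ 2 * K ≤ 3 * maxDeg w0 := by
  have h := run.maxDeg_three_mul_le hsymm hloop (maxDeg w0 / 2)
  by_cases hpar : maxDeg w0 % 2 = 0
  · exact ⟨3 * (maxDeg w0 / 2), by omega, by omega⟩
  · exact ⟨3 * (maxDeg w0 / 2) + 1, run.maxDeg_succ_eq_zero hsymm hloop (by omega), by omega⟩

end NSBRun

theorem CanEvacuate.maxDeg_le {V : Type} [Fintype V] [DecidableEq V] {w : V → V → ℕ} {T : ℕ}
    (h : CanEvacuate w T) : maxDeg w ≤ T := by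
  obtain ⟨M, hM, hcount⟩ := h
  refine (maxDeg_le_iff w).mpr fun v => ?_
  have hdisj : (↑(Finset.univ : Finset V) : Set V).PairwiseDisjoint
      fun u => Finset.univ.filter fun j => s(v, u) ∈ M j := by
    intro u₁ _ u₂ _ hne
    refine Finset.disjoint_left.mpr fun j hj₁ hj₂ => hne ?_
    exact (hM j).right_unique (Finset.mem_filter.mp hj₁).2 (Finset.mem_filter.mp hj₂).2
  calc deg w v = ∑ u, (Finset.univ.filter fun j => s(v, u) ∈ M j).card :=
        Finset.sum_congr rfl fun u _ => (hcount v u).symm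
    _ = (Finset.univ.biUnion fun u => Finset.univ.filter fun j => s(v, u) ∈ M j).card :=
        (Finset.card_biUnion hdisj).symm
    _ ≤ T := (Finset.card_le_univ _).trans_eq (Finset.card_fin T)

theorem nsb_evacuation_time_ratio_general {V : Type} [Fintype V] [DecidableEq V]
    (w0 : V → V → ℕ) (hsymm : ∀ u v, w0 u v = w0 v u) (hloop : ∀ v, w0 v v = 0)
    (run : NSBRun w0)
    (X' : ℕ) (hX' : IsLeast {T' | CanEvacuate w0 T'} X') :
    ∃ T : ℕ, IsLeast {k | ∀ u v : V, run.G k u v = 0} T ∧ 2 * T ≤ 3 * X' := by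
  obtain ⟨K, hK, hKle⟩ := run.exists_maxDeg_eq_zero hsymm hloop
  have hex : ∃ k, ∀ u v : V, run.G k u v = 0 := ⟨K, (maxDeg_eq_zero_iff _).mp hK⟩
  refine ⟨Nat.find hex, ⟨Nat.find_spec hex, fun k hk => Nat.find_min' hex hk⟩, ?_⟩
  have hTK := Nat.find_min' hex ((maxDeg_eq_zero_iff _).mp hK)
  have hΔX := hX'.1.maxDeg_le
  omega

/-- Every NSB evacuation run on a loopless multigraph on `n ≥ 2` vertices
terminates, its evacuation time `T` (the least slot at which the graph is edgeless)
satisfies `2·T ≤ 3·X′` where `X′` is the minimum evacuation time of `G(0)`. -/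
theorem nsb_evacuation_time_ratio {V : Type} [Fintype V] [DecidableEq V]
    (w0 : V → V → ℕ) (hsymm : ∀ u v, w0 u v = w0 v u) (hloop : ∀ v, w0 v v = 0)
    (hn : 2 ≤ Fintype.card V)
    (run : NSBRun w0)
    (X' : ℕ) (hX' : IsLeast {T' | CanEvacuate w0 T'} X') :
    ∃ T : ℕ, IsLeast {k | ∀ u v : V, run.G k u v = 0} T ∧ 2 * T ≤ 3 * X' :=
  nsb_evacuation_time_ratio_general w0 hsymm hloop run X' hX'

end NSBPaper
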